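/- Let T be the set of all triplets (i,j,k) with distinct indices 1 ≤ i,j,k ≤ n and j<k, and L_t the associated triplet matrices. Then the average (1/|T|) Σ_{t∈T} L_t^2 equals (6/n) I − (6/(n(n−1))) (11^T − I), and its largest eigenvalue is 6/(n−1). -/
import Mathlib


open Matrix BigOperators Finset

/-- The `n × n` symmetric matrix associated to a triplet `t = (i,j,k)`. -/
def tripletL (n : ℕ) (i j k : Fin n) : Matrix (Fin n) (Fin n) ℝ :=
  Matrix.of fun a b =>
    (if a = i ∧ b = j then (-1 : ℝ) else 0) + (if a = j ∧ b = i then -1 else 0) +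
    (if a = i ∧ b = k then 1 else 0) + (if a = k ∧ b = i then 1 else 0) +
    (if a = j ∧ b = j then 1 else 0) + (if a = k ∧ b = k then -1 else 0)

/-- The set of all triplets `(i,j,k)` with distinct indices and `j < k`. -/
def tripletSet (n : ℕ) : Finset (Fin n × Fin n × Fin n) :=
  Finset.univ.filter fun t => t.1 ≠ t.2.1 ∧ t.1 ≠ t.2.2 ∧ t.2.1 < t.2.2

/-! ### Auxiliary definitions -/

/-- Indicator of `a = i`, as a real number. -/
def dd {n : ℕ} (a i : Fin n) : ℝ := if a = i then 1 else 0

/-- `u` vector of the rank-two decomposition of `tripletL`. -/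
def uu {n : ℕ} (j k x : Fin n) : ℝ := dd x j - dd x k

/-- `v` vector of the rank-two decomposition of `tripletL`. -/
def vv {n : ℕ} (i j k x : Fin n) : ℝ := dd x j + dd x k - 2 * dd x i

/-- Entrywise value of `tripletL ^ 2` for distinct indices. -/
def gg {n : ℕ} (a b i j k : Fin n) : ℝ :=
  3 * (dd a i * dd b i + dd a j * dd b j + dd a k * dd b k)
    - (dd a i + dd a j + dd a k) * (dd b i + dd b j + dd b k)

lemma tripletL_eq {n : ℕ} {i j k : Fin n} (hij : i ≠ j) (hik : i ≠ k) (hjk : j ≠ k)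
    (a c : Fin n) :
    tripletL n i j k a c = (uu j k a * vv i j k c + vv i j k a * uu j k c) / 2 := by
  simp only [tripletL, Matrix.of_apply, uu, vv, dd]
  by_cases h1 : a = i <;> by_cases h2 : a = j <;> by_cases h3 : a = k <;>
    by_cases h4 : c = i <;> by_cases h5 : c = j <;> by_cases h6 : c = k <;>
    simp_all <;> ring

lemma sq_apply {n : ℕ} {i j k : Fin n} (hij : i ≠ j) (hik : i ≠ k) (hjk : j ≠ k)
    (a b : Fin n) :
    ((tripletL n i j k) ^ 2) a b = gg a b i j k := by
  have hU2 : ∑ c : Fin n, uu j k c * uu j k c = 2 := by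
    have h : ∀ c : Fin n, uu j k c * uu j k c = dd c j + dd c k := by
      intro c
      simp only [uu, dd]
      by_cases h5 : c = j <;> by_cases h6 : c = k <;> simp_all <;> ring
    simp only [h, dd, Finset.sum_add_distrib, Finset.sum_ite_eq', Finset.mem_univ, if_true]
    norm_num
  have hUV : ∑ c : Fin n, uu j k c * vv i j k c = 0 := by
    have h : ∀ c : Fin n, uu j k c * vv i j k c = dd c j - dd c k := by
      intro c
      simp only [uu, vv, dd]
      by_cases h4 : c = i <;> by_cases h5 : c = j <;> by_cases h6 : c = k <;> simp_all <;> ring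
    simp only [h, dd, Finset.sum_sub_distrib, Finset.sum_ite_eq', Finset.mem_univ, if_true]
    norm_num
  have hVV : ∑ c : Fin n, vv i j k c * vv i j k c = 6 := by
    have h : ∀ c : Fin n, vv i j k c * vv i j k c = dd c j + dd c k + 4 * dd c i := by
      intro c
      simp only [vv, dd]
      by_cases h4 : c = i <;> by_cases h5 : c = j <;> by_cases h6 : c = k <;> simp_all <;> ring
    simp only [h, dd, Finset.sum_add_distrib, ← Finset.mul_sum, Finset.sum_ite_eq',
      Finset.mem_univ, if_true]
    norm_num
  rw [sq, Matrix.mul_apply]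
  have expand : ∀ c : Fin n, tripletL n i j k a c * tripletL n i j k c b
      = ((uu j k a * vv i j k b) * (uu j k c * vv i j k c)
        + (uu j k a * uu j k b) * (vv i j k c * vv i j k c)
        + (vv i j k a * vv i j k b) * (uu j k c * uu j k c)
        + (vv i j k a * uu j k b) * (uu j k c * vv i j k c)) / 4 := by
    intro c
    rw [tripletL_eq hij hik hjk, tripletL_eq hij hik hjk]
    ring
  rw [Finset.sum_congr rfl fun c _ => expand c, ← Finset.sum_div]
  simp only [Finset.sum_add_distrib, ← Finset.mul_sum]
  rw [hU2, hUV, hVV]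
  simp only [gg, uu, vv]
  ring

lemma gg_swap {n : ℕ} (a b i j k : Fin n) : gg a b i k j = gg a b i j k := by
  simp only [gg]; ring

/-- Inclusion–exclusion for triple sums over distinct indices. -/
lemma inclexcl {n : ℕ} (F : Fin n → Fin n → Fin n → ℝ) :
    ∑ i : Fin n, ∑ j : Fin n, ∑ k : Fin n,
        (if i ≠ j ∧ i ≠ k ∧ j ≠ k then F i j k else 0)
      = (∑ i : Fin n, ∑ j : Fin n, ∑ k : Fin n, F i j k)
        - (∑ i : Fin n, ∑ k : Fin n, F i i k)
        - (∑ i : Fin n, ∑ j : Fin n, F i j i)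
        - (∑ i : Fin n, ∑ j : Fin n, F i j j)
        + 2 * ∑ i : Fin n, F i i i := by
  have key : ∀ i j k : Fin n, (if i ≠ j ∧ i ≠ k ∧ j ≠ k then F i j k else 0)
      = F i j k - (if i = j then F i j k else 0)
        - (if i = k then F i j k else 0) - (if j = k then F i j k else 0)
        + 2 * (if i = j then (if i = k then F i j k else 0) else 0) := by
    intro i j k
    by_cases h1 : i = j <;> by_cases h2 : i = k <;> by_cases h3 : j = k <;> simp_all <;> ring
  simp only [key]
  simp only [Finset.sum_add_distrib, Finset.sum_sub_distrib, ← Finset.mul_sum]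
  have T2 : ∑ i : Fin n, ∑ j : Fin n, ∑ k : Fin n, (if i = j then F i j k else 0)
      = ∑ i : Fin n, ∑ k : Fin n, F i i k := by
    refine Finset.sum_congr rfl fun i _ => ?_
    rw [Finset.sum_comm]
    simp [Finset.sum_ite_eq]
  have T3 : ∑ i : Fin n, ∑ j : Fin n, ∑ k : Fin n, (if i = k then F i j k else 0)
      = ∑ i : Fin n, ∑ j : Fin n, F i j i := by
    refine Finset.sum_congr rfl fun i _ => Finset.sum_congr rfl fun j _ => ?_
    simp [Finset.sum_ite_eq]
  have T4 : ∑ i : Fin n, ∑ j : Fin n, ∑ k : Fin n, (if j = k then F i j k else 0)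
      = ∑ i : Fin n, ∑ j : Fin n, F i j j := by
    refine Finset.sum_congr rfl fun i _ => Finset.sum_congr rfl fun j _ => ?_
    simp [Finset.sum_ite_eq]
  have T5 : ∑ i : Fin n, ∑ j : Fin n, ∑ k : Fin n,
      (if i = j then (if i = k then F i j k else 0) else 0) = ∑ i : Fin n, F i i i := by
    have h1 : ∀ i j : Fin n, ∑ k : Fin n, (if i = j then (if i = k then F i j k else 0) else 0)
        = if i = j then F i j i else 0 := by
      intro i j
      by_cases h : i = j <;> simp [h, Finset.sum_ite_eq]
    simp only [h1]
    refine Finset.sum_congr rfl fun i _ => ?_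
    simp [Finset.sum_ite_eq]
  rw [T2, T3, T4, T5]

/-- The set of all triplets with pairwise distinct entries. -/
def distSet (n : ℕ) : Finset (Fin n × Fin n × Fin n) :=
  Finset.univ.filter fun t => t.1 ≠ t.2.1 ∧ t.1 ≠ t.2.2 ∧ t.2.1 ≠ t.2.2

lemma sum_distSet_eq_two_mul {n : ℕ} (f : Fin n × Fin n × Fin n → ℝ)
    (hf : ∀ i j k : Fin n, f (i, k, j) = f (i, j, k)) :
    ∑ t ∈ distSet n, f t = 2 * ∑ t ∈ tripletSet n, f t := by
  rw [← Finset.sum_filter_add_sum_filter_not (distSet n) (fun t => t.2.1 < t.2.2)]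
  have e1 : (distSet n).filter (fun t => t.2.1 < t.2.2) = tripletSet n := by
    ext t
    simp only [distSet, tripletSet, Finset.mem_filter, Finset.mem_univ, true_and]
    constructor
    · rintro ⟨⟨h1, h2, _⟩, h4⟩; exact ⟨h1, h2, h4⟩
    · rintro ⟨h1, h2, h4⟩; exact ⟨⟨h1, h2, ne_of_lt h4⟩, h4⟩
  have e2 : ∑ t ∈ (distSet n).filter (fun t => ¬ t.2.1 < t.2.2), f t
      = ∑ t ∈ tripletSet n, f t := by
    refine Finset.sum_nbij' (i := fun t => (t.1, t.2.2, t.2.1))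
      (j := fun t => (t.1, t.2.2, t.2.1)) ?_ ?_ ?_ ?_ ?_
    · intro t ht
      simp only [distSet, tripletSet, Finset.mem_filter, Finset.mem_univ, true_and] at ht ⊢
      obtain ⟨⟨h1, h2, h3⟩, h4⟩ := ht
      exact ⟨h2, h1, lt_of_le_of_ne (not_lt.mp h4) (Ne.symm h3)⟩
    · intro t ht
      simp only [distSet, tripletSet, Finset.mem_filter, Finset.mem_univ, true_and] at ht ⊢
      obtain ⟨h1, h2, h4⟩ := ht
      exact ⟨⟨h2, h1, (ne_of_lt h4).symm⟩, not_lt.mpr (le_of_lt h4)⟩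
    · intro t _; rfl
    · intro t _; rfl
    · intro t _; exact (hf t.1 t.2.1 t.2.2).symm
  rw [e1, e2]
  ring

lemma sum_gg_tripletSet {n : ℕ} (a b : Fin n) :
    ∑ t ∈ tripletSet n, gg a b t.1 t.2.1 t.2.2
      = 3 * ((n : ℝ) - 2) * ((n : ℝ) * dd a b - 1) := by
  have h2 : ∑ t ∈ distSet n, gg a b t.1 t.2.1 t.2.2
      = 6 * ((n : ℝ) - 2) * ((n : ℝ) * dd a b - 1) := by
    rw [distSet, Finset.sum_filter, Fintype.sum_prod_type]
    simp only [Fintype.sum_prod_type]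
    rw [inclexcl (fun i j k => gg a b i j k)]
    have T1 : ∑ i : Fin n, ∑ j : Fin n, ∑ k : Fin n, gg a b i j k
        = 9 * (n:ℝ)^2 * dd a b - (3 * (n:ℝ)^2 * dd a b + 6 * n) := by
      simp [gg, dd, ite_mul, mul_ite, Finset.sum_ite_eq, Finset.mul_sum, mul_add, add_mul,
        Finset.sum_add_distrib, Finset.sum_sub_distrib]
      split_ifs <;> ring
    have T2 : ∑ i : Fin n, ∑ k : Fin n, gg a b i i k = 4 * (n:ℝ) * dd a b - 4 := by
      simp [gg, dd, ite_mul, mul_ite, Finset.sum_ite_eq, Finset.mul_sum, mul_add, add_mul,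
        Finset.sum_add_distrib, Finset.sum_sub_distrib]
      split_ifs <;> ring
    have T3 : ∑ i : Fin n, ∑ j : Fin n, gg a b i j i = 4 * (n:ℝ) * dd a b - 4 := by
      simp [gg, dd, ite_mul, mul_ite, Finset.sum_ite_eq, Finset.mul_sum, mul_add, add_mul,
        Finset.sum_add_distrib, Finset.sum_sub_distrib]
      split_ifs <;> ring
    have T4 : ∑ i : Fin n, ∑ j : Fin n, gg a b i j j = 4 * (n:ℝ) * dd a b - 4 := by
      simp [gg, dd, ite_mul, mul_ite, Finset.sum_ite_eq, Finset.mul_sum, mul_add, add_mul,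
        Finset.sum_add_distrib, Finset.sum_sub_distrib]
      split_ifs <;> ring
    have T5 : ∑ i : Fin n, gg a b i i i = 0 := by
      simp [gg, dd, ite_mul, mul_ite, Finset.sum_ite_eq, Finset.mul_sum, mul_add, add_mul,
        Finset.sum_add_distrib, Finset.sum_sub_distrib]
      split_ifs <;> ring
    rw [T1, T2, T3, T4, T5]
    ring
  have h3 := sum_distSet_eq_two_mul (fun t => gg a b t.1 t.2.1 t.2.2)
    (fun i j k => gg_swap a b i j k)
  rw [h3] at h2
  linarith

lemma card_tripletSet {n : ℕ} :
    ((tripletSet n).card : ℝ) = (n : ℝ) * ((n : ℝ) - 1) * ((n : ℝ) - 2) / 2 := by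
  have h1 : ((tripletSet n).card : ℝ) = ∑ t ∈ tripletSet n, (1 : ℝ) := by
    simp
  have h2 : ∑ t ∈ distSet n, (1 : ℝ) = (n : ℝ) * ((n : ℝ) - 1) * ((n : ℝ) - 2) := by
    rw [distSet, Finset.sum_filter, Fintype.sum_prod_type]
    simp only [Fintype.sum_prod_type]
    rw [inclexcl (fun _ _ _ => (1 : ℝ))]
    simp
    ring
  have h3 := sum_distSet_eq_two_mul (n := n) (fun _ => (1 : ℝ)) (fun _ _ _ => rfl)
  rw [h3] at h2
  simp only [Finset.sum_const, nsmul_eq_mul, mul_one] at h2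
  linarith

/-- The average `(1/|T|) Σ_{t ∈ T} L_t²` equals `(6/n) I - (6/(n(n-1))) (11ᵀ - I)`,
and its largest eigenvalue is `6/(n-1)`. -/
theorem average_tripletL_sq (n : ℕ) (hn : 3 ≤ n)
    (M : Matrix (Fin n) (Fin n) ℝ)
    (hM : M = ((tripletSet n).card : ℝ)⁻¹ •
      ∑ t ∈ tripletSet n, (tripletL n t.1 t.2.1 t.2.2) ^ 2) :
    M = (6 / (n : ℝ)) • (1 : Matrix (Fin n) (Fin n) ℝ) -
        (6 / ((n : ℝ) * ((n : ℝ) - 1))) •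
          ((Matrix.of fun _ _ => (1 : ℝ)) - (1 : Matrix (Fin n) (Fin n) ℝ)) ∧
    ∀ hH : M.IsHermitian, (⨆ i, hH.eigenvalues i) = 6 / ((n : ℝ) - 1) := by
  have hn3 : (3 : ℝ) ≤ (n : ℝ) := by exact_mod_cast hn
  have hne0 : (n : ℝ) ≠ 0 := by linarith
  have hne1 : (n : ℝ) - 1 ≠ 0 := by linarith
  have hne2 : (n : ℝ) - 2 ≠ 0 := by linarith
  -- entrywise value of M
  have hMab : ∀ a b : Fin n, M a b
      = (if a = b then 6 / (n : ℝ) else 0) - 6 / ((n : ℝ) * ((n : ℝ) - 1)) * (1 - dd a b) := by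
    intro a b
    have hs : (∑ t ∈ tripletSet n, (tripletL n t.1 t.2.1 t.2.2) ^ 2) a b
        = 3 * ((n : ℝ) - 2) * ((n : ℝ) * dd a b - 1) := by
      rw [Matrix.sum_apply]
      rw [Finset.sum_congr rfl fun t ht => ?_]
      · exact sum_gg_tripletSet a b
      · obtain ⟨-, h1, h2, h3⟩ := Finset.mem_filter.mp ht
        exact sq_apply h1 h2 (ne_of_lt h3) a b
    rw [hM, Matrix.smul_apply, hs, card_tripletSet, smul_eq_mul, dd]
    split_ifs <;> field_simp <;> ring
  constructor
  · ext a b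
    rw [hMab a b]
    simp only [Matrix.sub_apply, Matrix.smul_apply, Matrix.one_apply, Matrix.of_apply,
      smul_eq_mul, dd]
    split_ifs <;> ring
  · intro hH
    set α : ℝ := 6 / ((n : ℝ) - 1) with hα
    set β : ℝ := -(6 / ((n : ℝ) * ((n : ℝ) - 1))) with hβ
    have hαβ : α + β * (n : ℝ) = 0 := by
      rw [hα, hβ]; field_simp; ring
    have hαpos : 0 < α := by
      rw [hα]; exact div_pos (by norm_num) (by linarith)
    have hM' : ∀ a b : Fin n, M a b = (if a = b then α else 0) + β := by
      intro a b
      rw [hMab a b, hα, hβ, dd]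
      split_ifs <;> field_simp <;> ring
    -- each eigenvalue is either α or 0
    have dich : ∀ i : Fin n, hH.eigenvalues i = α ∨ hH.eigenvalues i = 0 := by
      intro i
      set μ := hH.eigenvalues i with hμ
      set x : Fin n → ℝ := ⇑(hH.eigenvectorBasis i) with hx
      have hx0 : x ≠ 0 := by
        intro h
        apply hH.eigenvectorBasis.orthonormal.ne_zero i
        ext c
        exact congrFun h c
      have heig : M *ᵥ x = μ • x := hH.mulVec_eigenvectorBasis i
      have hcoord : ∀ a : Fin n, μ * x a = α * x a + β * ∑ c : Fin n, x c := by
        intro a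
        have h1 := congrFun heig a
        have h2 : (M *ᵥ x) a = α * x a + β * ∑ c : Fin n, x c := by
          simp only [Matrix.mulVec, dotProduct]
          rw [Finset.sum_congr rfl fun c _ => by rw [hM' a c]]
          simp only [add_mul, Finset.sum_add_distrib, ite_mul, zero_mul,
            Finset.sum_ite_eq, Finset.mem_univ, if_true, ← Finset.mul_sum]
        rw [← h2, h1]
        simp
      by_cases hμα : μ = α
      · left; exact hμα
      · right
        have hne : μ - α ≠ 0 := sub_ne_zero.mpr hμα
        set s : ℝ := ∑ c : Fin n, x c with hs
        obtain ⟨C, hC⟩ : ∃ C : ℝ, C = β * s / (μ - α) := ⟨_, rfl⟩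
        have hconst : ∀ a : Fin n, x a = C := by
          intro a
          rw [hC, eq_div_iff hne]
          linear_combination hcoord a
        have hsn : s = (n : ℝ) * C := by
          calc s = ∑ c : Fin n, x c := hs
            _ = ∑ _c : Fin n, C := Finset.sum_congr rfl fun c _ => hconst c
            _ = (n : ℝ) * C := by simp [Finset.sum_const, mul_comm]
        have hc0 : C ≠ 0 := by
          intro h
          apply hx0
          funext a
          rw [hconst a, h]
          simp
        have a0 : Fin n := ⟨0, by omega⟩
        have h5 := hcoord a0
        rw [hconst a0, hsn] at h5
        have h7 : (μ - (α + β * (n : ℝ))) * C = 0 := by linear_combination h5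
        rcases mul_eq_zero.mp h7 with h | h
        · have : μ = α + β * (n : ℝ) := by linarith
          rw [this, hαβ]
        · exact absurd h hc0
    -- some eigenvalue equals α
    have hex : ∃ i : Fin n, hH.eigenvalues i = α := by
      by_contra hcon
      push_neg at hcon
      have hall : ∀ i : Fin n, hH.eigenvalues i = 0 := by
        intro i
        rcases dich i with h | h
        · exact absurd h (hcon i)
        · exact h
      have hM0 : M = 0 := by
        have hst := hH.spectral_theorem
        have hdiag : Matrix.diagonal (RCLike.ofReal ∘ hH.eigenvalues)
            = (0 : Matrix (Fin n) (Fin n) ℝ) := by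
          ext a b
          by_cases h : a = b <;>
            simp [Matrix.diagonal_apply, h, Function.comp, hall, RCLike.ofReal_real_eq_id]
        rw [hdiag] at hst
        simpa using hst
      have hab : α + β = 6 / (n : ℝ) := by
        rw [hα, hβ]; field_simp; ring
      have h00 : (0 : ℝ) = α + β := by
        have h := hM' ⟨0, by omega⟩ ⟨0, by omega⟩
        rw [hM0] at h
        simpa using h
      have hpos : 0 < 6 / (n : ℝ) := div_pos (by norm_num) (by linarith)
      rw [hab] at h00
      linarith
    obtain ⟨i0, hi0⟩ := hex
    haveI : Nonempty (Fin n) := ⟨⟨0, by omega⟩⟩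
    apply le_antisymm
    · apply ciSup_le
      intro i
      rcases dich i with h | h
      · rw [h]
      · rw [h]; linarith
    · calc (6 : ℝ) / ((n : ℝ) - 1) = hH.eigenvalues i0 := hi0.symm
        _ ≤ ⨆ i, hH.eigenvalues i :=
          le_ciSup (Set.Finite.bddAbove (Set.finite_range _)) i0
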